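/- Let A be an m×n complex matrix (m ≥ n) whose associated linear map is injective, and let A⁺ = (Aᴴ A)⁻¹ Aᴴ be its Moore–Penrose left inverse. Let k be a positive natural number, let ψ be a nonzero vector in ℂ^(Fin k × Fin n), and let ω = (1 ⊗ₖ A) ψ / ‖(1 ⊗ₖ A) ψ‖ ∈ ℂ^(Fin k × Fin m), a unit vector in the range of 1 ⊗ₖ A. Let O be any k×k complex matrix and set P = (A⁺)ᴴ A⁺ (an m×m matrix). Suppose the clustering bound |⟨ω, (O ⊗ₖ P) ω⟩ − ⟨ω, (O ⊗ₖ 1_m) ω⟩ · ⟨ω, (1_k ⊗ₖ P) ω⟩| ≤ ε · ‖O‖ · ‖P‖ holds for some ε ≥ 0. Then, with ω' = (1 ⊗ₖ A⁺) ω / ‖(1 ⊗ₖ A⁺) ω‖ ∈ ℂ^(Fin k × Fin n), one has ω' = ψ/‖ψ‖ and |⟨ω', (O ⊗ₖ 1_n) ω'⟩ − ⟨ω, (O ⊗ₖ 1_m) ω⟩| ≤ ε · ‖O‖ · (‖A‖ · ‖A⁺‖)². -/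

import Mathlib

open Matrix
open scoped Kronecker ComplexInnerProductSpace

/-- The `ℓ² → ℓ²` operator norm of a complex matrix. -/
noncomputable def l2opNorm {m n : Type*} [Fintype m] [Fintype n] [DecidableEq n]
    (M : Matrix m n ℂ) : ℝ :=
  ‖LinearMap.toContinuousLinearMap (Matrix.toEuclideanLin M)‖

/-!
Write `B = 1 ⊗ₖ A`. Since `A⁺ A = 1`, the map `1 ⊗ₖ A⁺` undoes `B`, so `ω'` is the normalised `ψ`;
and `Aᴴ P A = (A⁺ A)ᴴ (A⁺ A) = 1`, so conjugation by `B` turns `O ⊗ₖ P` into `O ⊗ₖ 1` and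
`1 ⊗ₖ P` into `1`. Hence the clustering defect is exactly `(‖ψ‖ / ‖B ψ‖)²` times the defect to be
bounded, and `‖B ψ‖ ≤ ‖A‖ ‖ψ‖`, `‖P‖ = ‖A⁺‖²` turn the clustering bound into the claim.
-/

section

variable {ι a b R 𝕜 E : Type*}

theorem inv_norm_smul_smul_of_pos [NormedAddCommGroup E] [NormedSpace ℝ E] {r : ℝ} (hr : 0 < r)
    (x : E) : ‖r • x‖⁻¹ • r • x = ‖x‖⁻¹ • x := by
  rw [norm_smul, Real.norm_of_nonneg hr.le, smul_smul, mul_inv, mul_right_comm,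
    inv_mul_cancel₀ hr.ne', one_mul]

theorem inner_real_smul_apply_real_smul [NormedAddCommGroup E] [InnerProductSpace ℂ E]
    (T : E →ₗ[ℂ] E) (r : ℝ) (x : E) :
    ⟪r • x, T (r • x)⟫ = ((r ^ 2 : ℝ) : ℂ) * ⟪x, T x⟫ := by
  rw [LinearMap.map_smul_of_tower, ← Complex.coe_smul, ← Complex.coe_smul, inner_smul_left,
    inner_smul_right, Complex.conj_ofReal]
  push_cast
  ring

namespace EuclideanSpace

def slice [RCLike 𝕜] (x : EuclideanSpace 𝕜 (ι × b)) (i : ι) : EuclideanSpace 𝕜 b :=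
  WithLp.toLp 2 fun j => x (i, j)

@[simp]
theorem slice_apply [RCLike 𝕜] (x : EuclideanSpace 𝕜 (ι × b)) (i : ι) (j : b) :
    x.slice i j = x (i, j) := rfl

theorem norm_sq_eq_sum_norm_sq_slice [RCLike 𝕜] [Fintype ι] [Fintype b]
    (x : EuclideanSpace 𝕜 (ι × b)) : ‖x‖ ^ 2 = ∑ i, ‖x.slice i‖ ^ 2 := by
  simp only [norm_sq_eq, Fintype.sum_prod_type, slice_apply]

end EuclideanSpace

namespace Matrix

open scoped ComplexOrder in
theorem isUnit_conjTranspose_mul_self_of_injective [RCLike 𝕜] [Fintype a] [Fintype b]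
    [DecidableEq b] {A : Matrix a b 𝕜} (hA : Function.Injective A.mulVec) :
    IsUnit (Aᴴ * A) := by
  rw [← mulVec_injective_iff_isUnit, ← coe_mulVecLin, ← LinearMap.ker_eq_bot,
    ker_mulVecLin_conjTranspose_mul_self, LinearMap.ker_eq_bot]
  exact hA

theorem inv_conjTranspose_mul_self_mul_conjTranspose_mul_self [RCLike 𝕜] [Fintype a]
    [Fintype b] [DecidableEq b] {A : Matrix a b 𝕜} (hA : Function.Injective A.mulVec) :
    (Aᴴ * A)⁻¹ * Aᴴ * A = 1 := by
  rw [Matrix.mul_assoc,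
    nonsing_inv_mul _ ((isUnit_conjTranspose_mul_self_of_injective hA).map detMonoidHom)]

theorem conjTranspose_mul_conjTranspose_mul_self_mul_of_mul_eq_one [Semiring R] [StarRing R]
    [Fintype a] [Fintype b] [DecidableEq b] {L : Matrix b a R} {A : Matrix a b R}
    (hLA : L * A = 1) : Aᴴ * (Lᴴ * L) * A = 1 := by
  rw [← Matrix.mul_assoc, ← conjTranspose_mul, Matrix.mul_assoc, hLA, conjTranspose_one,
    Matrix.one_mul]

theorem one_kronecker_conjTranspose_mul_kronecker_mul [CommSemiring R] [StarRing R] [Fintype ι]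
    [Fintype a] [DecidableEq ι] (A : Matrix a b R) (O : Matrix ι ι R) (P : Matrix a a R) :
    ((1 : Matrix ι ι R) ⊗ₖ A)ᴴ * (O ⊗ₖ P) * ((1 : Matrix ι ι R) ⊗ₖ A) =
      O ⊗ₖ (Aᴴ * P * A) := by
  rw [conjTranspose_kronecker, conjTranspose_one, ← mul_kronecker_mul, ← mul_kronecker_mul,
    Matrix.one_mul, Matrix.mul_one]

theorem one_kronecker_mul_one_kronecker_of_mul_eq_one [CommSemiring R] [Fintype ι] [Fintype a]
    [DecidableEq ι] [DecidableEq b] {L : Matrix b a R} {A : Matrix a b R} (hLA : L * A = 1) :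
    ((1 : Matrix ι ι R) ⊗ₖ L) * ((1 : Matrix ι ι R) ⊗ₖ A) = 1 := by
  rw [← mul_kronecker_mul, hLA, Matrix.one_mul, one_kronecker_one]

theorem inner_toEuclideanLin_apply_toEuclideanLin [RCLike 𝕜] [Fintype a] [Fintype b]
    [DecidableEq a] [DecidableEq b] (B : Matrix a b 𝕜) (M : Matrix a a 𝕜)
    (x y : EuclideanSpace 𝕜 b) :
    inner 𝕜 (toEuclideanLin B x) (toEuclideanLin M (toEuclideanLin B y)) =
      inner 𝕜 x (toEuclideanLin (Bᴴ * M * B) y) := by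
  rw [toLpLin_mul_same, toLpLin_mul_same, LinearMap.comp_apply, LinearMap.comp_apply,
    toEuclideanLin_conjTranspose_eq_adjoint, LinearMap.adjoint_inner_right]

theorem toEuclideanLin_apply_toEuclideanLin_of_mul_eq_one [RCLike 𝕜] [Fintype a] [Fintype b]
    [DecidableEq a] [DecidableEq b] {L : Matrix b a 𝕜} {B : Matrix a b 𝕜} (hLB : L * B = 1)
    (x : EuclideanSpace 𝕜 b) : toEuclideanLin L (toEuclideanLin B x) = x := by
  rw [← LinearMap.comp_apply, ← toLpLin_mul_same, hLB, toLpLin_one, LinearMap.id_apply]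

theorem inv_norm_smul_toEuclideanLin_of_mul_eq_one [Fintype a] [Fintype b]
    [DecidableEq a] [DecidableEq b] {L : Matrix b a ℂ} {B : Matrix a b ℂ} (hLB : L * B = 1)
    {ψ : EuclideanSpace ℂ b} {ω : EuclideanSpace ℂ a}
    (hω : ω = ‖toEuclideanLin B ψ‖⁻¹ • toEuclideanLin B ψ) :
    ‖toEuclideanLin L ω‖⁻¹ • toEuclideanLin L ω = ‖ψ‖⁻¹ • ψ := by
  have hLBψ := toEuclideanLin_apply_toEuclideanLin_of_mul_eq_one hLB ψ
  rcases eq_or_ne ψ 0 with rfl | hψ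
  · simp [hω]
  have hBψ : 0 < ‖toEuclideanLin B ψ‖ :=
    norm_pos_iff.2 fun h => hψ (by rw [← hLBψ, h, map_zero])
  rw [hω, LinearMap.map_smul_of_tower, hLBψ, inv_norm_smul_smul_of_pos (inv_pos.2 hBψ)]

theorem slice_toEuclideanLin_one_kronecker_apply [RCLike 𝕜] [Fintype ι] [Fintype b]
    [DecidableEq ι] [DecidableEq b] (M : Matrix a b 𝕜) (x : EuclideanSpace 𝕜 (ι × b)) (i : ι) :
    (toEuclideanLin ((1 : Matrix ι ι 𝕜) ⊗ₖ M) x).slice i = toEuclideanLin M (x.slice i) := by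
  ext j
  simp [toLpLin_apply, mulVec, dotProduct, Fintype.sum_prod_type, one_apply, ite_mul]

theorem norm_toEuclideanLin_one_kronecker_apply_le [Fintype ι] [Fintype a] [Fintype b]
    [DecidableEq ι] [DecidableEq b] (M : Matrix a b ℂ) (x : EuclideanSpace ℂ (ι × b)) :
    ‖toEuclideanLin ((1 : Matrix ι ι ℂ) ⊗ₖ M) x‖ ≤ l2opNorm M * ‖x‖ := by
  have hM : ∀ y, ‖toEuclideanLin M y‖ ≤ l2opNorm M * ‖y‖ :=
    (LinearMap.toContinuousLinearMap (toEuclideanLin M)).le_opNorm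
  refine le_of_sq_le_sq ?_ (mul_nonneg (norm_nonneg _) (norm_nonneg x))
  calc ‖toEuclideanLin ((1 : Matrix ι ι ℂ) ⊗ₖ M) x‖ ^ 2
      = ∑ i, ‖toEuclideanLin M (x.slice i)‖ ^ 2 := by
        simp only [EuclideanSpace.norm_sq_eq_sum_norm_sq_slice,
          slice_toEuclideanLin_one_kronecker_apply]
    _ ≤ ∑ i, (l2opNorm M * ‖x.slice i‖) ^ 2 := by
        gcongr with i
        exact hM _
    _ = (l2opNorm M * ‖x‖) ^ 2 := by
        simp only [mul_pow, EuclideanSpace.norm_sq_eq_sum_norm_sq_slice x, Finset.mul_sum]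

theorem norm_sub_inner_kronecker_one_eq [Fintype ι] [Fintype a] [Fintype b] [DecidableEq ι]
    [DecidableEq a] [DecidableEq b] {A : Matrix a b ℂ} {P : Matrix a a ℂ}
    (hAPA : Aᴴ * P * A = 1) (O : Matrix ι ι ℂ) (ψ : EuclideanSpace ℂ (ι × b))
    {ω : EuclideanSpace ℂ (ι × a)}
    (hω : ω = ‖toEuclideanLin ((1 : Matrix ι ι ℂ) ⊗ₖ A) ψ‖⁻¹ •
      toEuclideanLin ((1 : Matrix ι ι ℂ) ⊗ₖ A) ψ) :
    ‖⟪‖ψ‖⁻¹ • ψ, toEuclideanLin (O ⊗ₖ (1 : Matrix b b ℂ)) (‖ψ‖⁻¹ • ψ)⟫ -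
        ⟪ω, toEuclideanLin (O ⊗ₖ (1 : Matrix a a ℂ)) ω⟫‖ =
      (‖toEuclideanLin ((1 : Matrix ι ι ℂ) ⊗ₖ A) ψ‖ / ‖ψ‖) ^ 2 *
        ‖⟪ω, toEuclideanLin (O ⊗ₖ P) ω⟫ -
          ⟪ω, toEuclideanLin (O ⊗ₖ (1 : Matrix a a ℂ)) ω⟫ *
            ⟪ω, toEuclideanLin ((1 : Matrix ι ι ℂ) ⊗ₖ P) ω⟫‖ := by
  rcases eq_or_ne ψ 0 with rfl | hψ
  · simp [hω]
  set B := (1 : Matrix ι ι ℂ) ⊗ₖ A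
  have hleft : (Bᴴ * ((1 : Matrix ι ι ℂ) ⊗ₖ P)) * B = 1 := by
    rw [one_kronecker_conjTranspose_mul_kronecker_mul, hAPA, one_kronecker_one]
  have hc : 0 < ‖toEuclideanLin B ψ‖ := norm_pos_iff.2 fun h => hψ (by
    rw [← toEuclideanLin_apply_toEuclideanLin_of_mul_eq_one hleft ψ, h, map_zero])
  have hs : 0 < ‖ψ‖ := norm_pos_iff.2 hψ
  have hexp : ∀ M, ⟪ω, toEuclideanLin M ω⟫ =
      ((‖toEuclideanLin B ψ‖⁻¹ ^ 2 : ℝ) : ℂ) * ⟪ψ, toEuclideanLin (Bᴴ * M * B) ψ⟫ := fun M => by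
    rw [hω, inner_real_smul_apply_real_smul, inner_toEuclideanLin_apply_toEuclideanLin]
  rw [inner_real_smul_apply_real_smul, hexp (O ⊗ₖ P), hexp (1 ⊗ₖ P),
    one_kronecker_conjTranspose_mul_kronecker_mul, one_kronecker_conjTranspose_mul_kronecker_mul,
    hAPA, one_kronecker_one, toLpLin_one, LinearMap.id_apply, inner_self_eq_norm_sq_to_K,
    RCLike.ofReal_eq_complex_ofReal]
  set c := ‖toEuclideanLin B ψ‖
  set s := ‖ψ‖
  generalize ⟪ψ, toEuclideanLin (O ⊗ₖ (1 : Matrix b b ℂ)) ψ⟫ = X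
  generalize ⟪ω, toEuclideanLin (O ⊗ₖ (1 : Matrix a a ℂ)) ω⟫ = q
  have hfactor : ((c⁻¹ ^ 2 : ℝ) : ℂ) * X - q * (((c⁻¹ ^ 2 : ℝ) : ℂ) * (s : ℂ) ^ 2) =
      (((s / c) ^ 2 : ℝ) : ℂ) * (((s⁻¹ ^ 2 : ℝ) : ℂ) * X - q) := by
    have : (c : ℂ) ≠ 0 := by exact_mod_cast hc.ne'
    have : (s : ℂ) ≠ 0 := by exact_mod_cast hs.ne'
    push_cast
    field_simp
  rw [hfactor, norm_mul, Complex.norm_real, Real.norm_of_nonneg (by positivity)]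
  field_simp

end Matrix

end

theorem l2opNorm_nonneg {a b : Type*} [Fintype a] [Fintype b] [DecidableEq b]
    (M : Matrix a b ℂ) : 0 ≤ l2opNorm M :=
  norm_nonneg _

open scoped Matrix.Norms.L2Operator in
theorem l2opNorm_conjTranspose_mul_self {a b : Type*} [Fintype a] [Fintype b] [DecidableEq b]
    (M : Matrix a b ℂ) : l2opNorm (Mᴴ * M) = l2opNorm M ^ 2 :=
  (l2_opNorm_conjTranspose_mul_self M).trans (sq _).symm

theorem per_step_disentangling_bound_rectangular_general (m n k : ℕ)
    (A : Matrix (Fin m) (Fin n) ℂ) (hA : Function.Injective A.mulVec)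
    (Ap : Matrix (Fin n) (Fin m) ℂ) (hAp : Ap = (Aᴴ * A)⁻¹ * Aᴴ)
    (ψ : EuclideanSpace ℂ (Fin k × Fin n))
    (ω : EuclideanSpace ℂ (Fin k × Fin m))
    (hω : ω = ‖toEuclideanLin ((1 : Matrix (Fin k) (Fin k) ℂ) ⊗ₖ A) ψ‖⁻¹ •
               toEuclideanLin ((1 : Matrix (Fin k) (Fin k) ℂ) ⊗ₖ A) ψ)
    (O : Matrix (Fin k) (Fin k) ℂ)
    (P : Matrix (Fin m) (Fin m) ℂ) (hP : P = Apᴴ * Ap)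
    (ε : ℝ)
    (hcluster :
      ‖(⟪ω, toEuclideanLin (O ⊗ₖ P) ω⟫ -
          ⟪ω, toEuclideanLin (O ⊗ₖ (1 : Matrix (Fin m) (Fin m) ℂ)) ω⟫ *
          ⟪ω, toEuclideanLin ((1 : Matrix (Fin k) (Fin k) ℂ) ⊗ₖ P) ω⟫)‖ ≤
        ε * l2opNorm O * l2opNorm P)
    (ω' : EuclideanSpace ℂ (Fin k × Fin n))
    (hω' : ω' = ‖toEuclideanLin ((1 : Matrix (Fin k) (Fin k) ℂ) ⊗ₖ Ap) ω‖⁻¹ •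
                 toEuclideanLin ((1 : Matrix (Fin k) (Fin k) ℂ) ⊗ₖ Ap) ω) :
    ω' = ‖ψ‖⁻¹ • ψ ∧
    ‖(⟪ω', toEuclideanLin (O ⊗ₖ (1 : Matrix (Fin n) (Fin n) ℂ)) ω'⟫ -
        ⟪ω, toEuclideanLin (O ⊗ₖ (1 : Matrix (Fin m) (Fin m) ℂ)) ω⟫)‖ ≤
      ε * l2opNorm O * (l2opNorm A * l2opNorm Ap) ^ 2 := by
  have hApA : Ap * A = 1 := hAp ▸ inv_conjTranspose_mul_self_mul_conjTranspose_mul_self hA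
  have hω'ψ : ω' = ‖ψ‖⁻¹ • ψ := hω' ▸ inv_norm_smul_toEuclideanLin_of_mul_eq_one
    (one_kronecker_mul_one_kronecker_of_mul_eq_one hApA) hω
  refine ⟨hω'ψ, ?_⟩
  have hAPA : Aᴴ * P * A = 1 :=
    hP ▸ conjTranspose_mul_conjTranspose_mul_self_mul_of_mul_eq_one hApA
  have hratio : ‖toEuclideanLin ((1 : Matrix (Fin k) (Fin k) ℂ) ⊗ₖ A) ψ‖ / ‖ψ‖ ≤ l2opNorm A :=
    div_le_of_le_mul₀ (norm_nonneg _) (l2opNorm_nonneg A)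
      (norm_toEuclideanLin_one_kronecker_apply_le A ψ)
  rw [hω'ψ, norm_sub_inner_kronecker_one_eq hAPA O ψ hω]
  calc _ ≤ l2opNorm A ^ 2 * (ε * l2opNorm O * l2opNorm P) :=
        mul_le_mul (pow_le_pow_left₀ (by positivity) hratio 2) hcluster (norm_nonneg _)
          (sq_nonneg _)
    _ = ε * l2opNorm O * (l2opNorm A * l2opNorm Ap) ^ 2 := by
        rw [hP, l2opNorm_conjTranspose_mul_self]
        ring

theorem per_step_disentangling_bound_rectangular (m n k : ℕ) (hk : 0 < k) (hmn : n ≤ m)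
    (A : Matrix (Fin m) (Fin n) ℂ) (hA : Function.Injective A.mulVec)
    (Ap : Matrix (Fin n) (Fin m) ℂ) (hAp : Ap = (Aᴴ * A)⁻¹ * Aᴴ)
    (ψ : EuclideanSpace ℂ (Fin k × Fin n)) (hψ : ψ ≠ 0)
    (ω : EuclideanSpace ℂ (Fin k × Fin m))
    (hω : ω = ‖toEuclideanLin ((1 : Matrix (Fin k) (Fin k) ℂ) ⊗ₖ A) ψ‖⁻¹ •
               toEuclideanLin ((1 : Matrix (Fin k) (Fin k) ℂ) ⊗ₖ A) ψ)
    (O : Matrix (Fin k) (Fin k) ℂ)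
    (P : Matrix (Fin m) (Fin m) ℂ) (hP : P = Apᴴ * Ap)
    (ε : ℝ) (hε : 0 ≤ ε)
    (hcluster :
      ‖(⟪ω, toEuclideanLin (O ⊗ₖ P) ω⟫ -
          ⟪ω, toEuclideanLin (O ⊗ₖ (1 : Matrix (Fin m) (Fin m) ℂ)) ω⟫ *
          ⟪ω, toEuclideanLin ((1 : Matrix (Fin k) (Fin k) ℂ) ⊗ₖ P) ω⟫)‖ ≤
        ε * l2opNorm O * l2opNorm P)
    (ω' : EuclideanSpace ℂ (Fin k × Fin n))
    (hω' : ω' = ‖toEuclideanLin ((1 : Matrix (Fin k) (Fin k) ℂ) ⊗ₖ Ap) ω‖⁻¹ •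
                 toEuclideanLin ((1 : Matrix (Fin k) (Fin k) ℂ) ⊗ₖ Ap) ω) :
    ω' = ‖ψ‖⁻¹ • ψ ∧
    ‖(⟪ω', toEuclideanLin (O ⊗ₖ (1 : Matrix (Fin n) (Fin n) ℂ)) ω'⟫ -
        ⟪ω, toEuclideanLin (O ⊗ₖ (1 : Matrix (Fin m) (Fin m) ℂ)) ω⟫)‖ ≤
      ε * l2opNorm O * (l2opNorm A * l2opNorm Ap) ^ 2 :=
  per_step_disentangling_bound_rectangular_general m n k A hA Ap hAp ψ ω hω O P hP ε hcluster ω' hω'
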